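/- arXiv:2605.11617 — 4 statements merged into one kernel-verified Lean document; each statement's English description precedes it below -/
import Mathlib

section
/- Let $U$ be a multiset of $m \ge 1$ labeled samples with class counts $(n_1,\dots,n_K)$, $\sum_c n_c = m$, and Gini impurity $G(U) = 1 - \sum_c (n_c/m)^2$. If $U^{(i)}$ is obtained from $U$ by changing the label of a single sample (so one class count decreases by 1 and another increases by 1), then $|G(U) - G(U^{(i)})| \le 2/m$. -/
/-- If a multiset of `m ≥ 1` labeled samples with class counts
`n c` (summing to `m`) has one sample's label changed (class `a` count drops
by one, class `b` count rises by one), the Gini impurity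
`G = 1 - ∑ c, (n c / m)^2` changes by at most `2/m`. -/
theorem gini_node_sensitivity (K m : ℕ) (hm : 1 ≤ m)
    (n : Fin K → ℕ) (hsum : ∑ c, n c = m)
    (a b : Fin K) (hab : a ≠ b) (ha : 1 ≤ n a)
    (n' : Fin K → ℕ)
    (hn' : n' = Function.update (Function.update n a (n a - 1)) b (n b + 1)) :
    |(1 - ∑ c, ((n c : ℝ) / m) ^ 2) - (1 - ∑ c, ((n' c : ℝ) / m) ^ 2)|
      ≤ 2 / m := by
  have hmR : (0:ℝ) < m := by exact_mod_cast hm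
  have hba : b ∈ Finset.univ.erase a := Finset.mem_erase.mpr ⟨Ne.symm hab, Finset.mem_univ b⟩
  have hsplit : ∀ g : Fin K → ℕ,
      ∑ c, ((g c : ℝ)/m)^2 = ((g a:ℝ)/m)^2 + (((g b:ℝ)/m)^2
        + ∑ c ∈ (Finset.univ.erase a).erase b, ((g c:ℝ)/m)^2) := by
    intro g
    rw [← Finset.add_sum_erase _ _ (Finset.mem_univ a),
        ← Finset.add_sum_erase _ _ hba]
  have htail : ∑ c ∈ (Finset.univ.erase a).erase b, ((n' c : ℝ)/m)^2
      = ∑ c ∈ (Finset.univ.erase a).erase b, ((n c : ℝ)/m)^2 := by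
    apply Finset.sum_congr rfl
    intro c hc
    obtain ⟨hcb, hca, -⟩ := Finset.mem_erase.mp hc |>.imp id (Finset.mem_erase.mp)
    simp [hn', Function.update_of_ne hcb, Function.update_of_ne hca]
  have hn'a : ((n' a : ℕ):ℝ) = (n a : ℝ) - 1 := by
    rw [hn', Function.update_of_ne hab, Function.update_self]
    push_cast [Nat.cast_sub ha]
    ring
  have hn'b : ((n' b : ℕ):ℝ) = (n b : ℝ) + 1 := by
    rw [hn', Function.update_self]; push_cast; ring
  have hpair : n a + n b ≤ m := by
    have h := Finset.sum_le_sum_of_subset (Finset.subset_univ ({a, b} : Finset (Fin K)))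
      (f := n)
    rw [Finset.sum_pair hab, hsum] at h
    exact h
  have hA : (1:ℝ) ≤ (n a : ℝ) := by exact_mod_cast ha
  have hB : (0:ℝ) ≤ (n b : ℝ) := by positivity
  have hABm : (n a : ℝ) + (n b : ℝ) ≤ m := by exact_mod_cast hpair
  rw [hsplit n, hsplit n', htail, hn'a, hn'b]
  set T := ∑ c ∈ (Finset.univ.erase a).erase b, ((n c : ℝ)/m)^2 with hT
  set A := (n a : ℝ)
  set B := (n b : ℝ)
  have hEq : (1 - ((A/m)^2 + ((B/m)^2 + T))) - (1 - (((A-1)/m)^2 + (((B+1)/m)^2 + T)))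
      = (2*B - 2*A + 2)/(m*m) := by
    field_simp
    ring
  rw [hEq, abs_div, abs_of_pos (mul_pos hmR hmR), div_le_div_iff₀ (mul_pos hmR hmR) hmR]
  have habs : |2*B - 2*A + 2| ≤ 2*m := abs_le.mpr ⟨by nlinarith, by nlinarith⟩
  nlinarith [abs_nonneg (2*B - 2*A + 2)]
end

section
/- The constant $4/n$ for the same-child-routing sensitivity of the Gini split gain is asymptotically tight: with binary labels, $n_L = m$ left samples all of class 1 and $n - m$ right samples all of class 0, flipping one left sample to class 0 changes the split gain by exactly $\Delta(m,n) = \frac{2(n-m)(2m-1)}{n^2 m}$, and with $m = \lfloor\sqrt{n/2}\rfloor$ one has $n\,\Delta(m,n) \to 4$ as $n \to \infty$. Hence for every $\gamma > 0$ there exist $n$ and a configuration with $|F(S) - F(S^{(i)})| > 4/n - \gamma$. -/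
open Filter

/-- Exact split-gain change when one class-1 sample in a pure-class-1 left
child of size `m` (out of `n`, right child pure class 0) is flipped to
class 0, routing unchanged. -/
noncomputable def giniFlipDelta (m n : ℕ) : ℝ :=
  2 * ((n : ℝ) - m) * (2 * (m : ℝ) - 1) / ((n : ℝ) ^ 2 * m)

/-! Before the flip both children are pure, so the gain is the parent impurity `G(m/n)`.
After it the parent has proportion `(m-1)/n` and the left child `(m-1)/m`, while the
right child stays pure. The loss `Δ(m,n)` factors as `(1/n)(2 - 2m/n)(2 - 1/m)`, which is
close to `4/n` exactly when `1 ≪ m ≪ n`; `m = ⌊√(n/2)⌋` is one such choice. -/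

lemma giniFlipDelta_nonneg {m n : ℕ} (hm : 1 ≤ m) (hmn : m ≤ n) : 0 ≤ giniFlipDelta m n := by
  have hm' : (1 : ℝ) ≤ m := by exact_mod_cast hm
  have hmn' : (m : ℝ) ≤ n := by exact_mod_cast hmn
  have h₁ : (0 : ℝ) ≤ (n : ℝ) - m := by linarith
  have h₂ : (0 : ℝ) ≤ 2 * (m : ℝ) - 1 := by linarith
  unfold giniFlipDelta
  positivity

lemma gini_gain_sub_flip_eq_giniFlipDelta {m n : ℕ} (hm : m ≠ 0) (hn : n ≠ 0) :
    (2 * ((m : ℝ) / n) * (1 - (m : ℝ) / n))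
        - ((2 * (((m : ℝ) - 1) / n) * (1 - ((m : ℝ) - 1) / n))
            - ((m : ℝ) / n) * (2 * (((m : ℝ) - 1) / m) * (1 / (m : ℝ))))
      = giniFlipDelta m n := by
  unfold giniFlipDelta
  field_simp
  ring

lemma natCast_mul_giniFlipDelta {m n : ℕ} (hm : m ≠ 0) (hn : n ≠ 0) :
    (n : ℝ) * giniFlipDelta m n = (2 - 2 * ((m : ℝ) / n)) * (2 - 1 / (m : ℝ)) := by
  unfold giniFlipDelta
  field_simp

lemma tendsto_natCast_mul_giniFlipDelta {m : ℕ → ℕ}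
    (hm : Tendsto (fun k => (m k : ℝ)) atTop atTop)
    (hmk : Tendsto (fun k => (m k : ℝ) / k) atTop (nhds 0)) :
    Tendsto (fun k : ℕ => (k : ℝ) * giniFlipDelta (m k) k) atTop (nhds 4) := by
  have hleft : Tendsto (fun k => 2 - 2 * ((m k : ℝ) / k)) atTop (nhds 2) := by
    simpa using (hmk.const_mul 2).const_sub 2
  have hright : Tendsto (fun k => 2 - 1 / (m k : ℝ)) atTop (nhds 2) := by
    simpa using hm.inv_tendsto_atTop.const_sub 2
  have hprod := hleft.mul hright
  rw [show (2 : ℝ) * 2 = 4 by norm_num] at hprod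
  refine hprod.congr' ?_
  filter_upwards [hm.eventually_gt_atTop 0, eventually_gt_atTop 0] with k hmk hk
  rw [natCast_mul_giniFlipDelta (by exact_mod_cast hmk.ne') hk.ne']

lemma two_mul_sq_floor_sqrt_half_le (n : ℕ) : 2 * (⌊Real.sqrt (n / 2)⌋₊ : ℝ) ^ 2 ≤ n := by
  have hfloor := Nat.floor_le (Real.sqrt_nonneg ((n : ℝ) / 2))
  have hsq : (⌊Real.sqrt (n / 2)⌋₊ : ℝ) ^ 2 ≤ n / 2 :=
    (pow_le_pow_left₀ (Nat.cast_nonneg _) hfloor 2).trans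
      (Real.sq_sqrt (by positivity)).le
  linarith

lemma floor_sqrt_half_le (n : ℕ) : ⌊Real.sqrt (n / 2)⌋₊ ≤ n := by
  have h := two_mul_sq_floor_sqrt_half_le n
  have hsq : ⌊Real.sqrt (n / 2)⌋₊ ^ 2 ≤ n := by
    have : (⌊Real.sqrt (n / 2)⌋₊ : ℝ) ^ 2 ≤ n := by
      linarith [sq_nonneg (⌊Real.sqrt (n / 2)⌋₊ : ℝ)]
    exact_mod_cast this
  exact (Nat.le_self_pow two_ne_zero _).trans hsq

lemma tendsto_floor_sqrt_half_atTop :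
    Tendsto (fun n : ℕ => (⌊Real.sqrt (n / 2)⌋₊ : ℝ)) atTop atTop :=
  tendsto_natCast_atTop_atTop.comp <| tendsto_nat_floor_atTop.comp <|
    Real.tendsto_sqrt_atTop.comp <| tendsto_natCast_atTop_atTop.atTop_div_const two_pos

/-- Squeezed by `1 / (2m)`, since `2m² ≤ n`. -/
lemma tendsto_floor_sqrt_half_div_self :
    Tendsto (fun n : ℕ => (⌊Real.sqrt (n / 2)⌋₊ : ℝ) / n) atTop (nhds 0) := by
  have hbound : Tendsto (fun n : ℕ => (2 : ℝ)⁻¹ * (⌊Real.sqrt (n / 2)⌋₊ : ℝ)⁻¹) atTop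
      (nhds 0) := by
    simpa using tendsto_floor_sqrt_half_atTop.inv_tendsto_atTop.const_mul (2 : ℝ)⁻¹
  refine squeeze_zero' (Eventually.of_forall fun n => by positivity) ?_ hbound
  filter_upwards [tendsto_floor_sqrt_half_atTop.eventually_gt_atTop 0] with n hm
  have hn : (0 : ℝ) < n := by
    nlinarith [two_mul_sq_floor_sqrt_half_le n]
  rw [div_le_iff₀ hn, ← mul_inv, mul_comm, ← div_eq_mul_inv, le_div_iff₀ (by positivity)]
  nlinarith [two_mul_sq_floor_sqrt_half_le n]

/-- Asymptotic tightness of the `4/n` same-child-routing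
sensitivity of the Gini split gain.  (i) In the configuration with `m` left
samples all of class 1 and `n - m` right samples all of class 0, flipping one
left sample to class 0 changes the gain by exactly
`Δ(m,n) = 2(n-m)(2m-1)/(n² m)`; (ii) with `m = ⌊√(n/2)⌋`,
`n·Δ(m,n) → 4` as `n → ∞`; (iii) hence for every `γ > 0` there is a
configuration with gain change `> 4/n - γ`. -/
theorem gini_gain_sensitivity_tight :
    (∀ n m : ℕ, 1 ≤ m → m ≤ n →
      |(2 * ((m : ℝ) / n) * (1 - (m : ℝ) / n))
          - ((2 * (((m : ℝ) - 1) / n) * (1 - ((m : ℝ) - 1) / n))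
              - ((m : ℝ) / n) * (2 * (((m : ℝ) - 1) / m) * (1 / (m : ℝ))))|
        = giniFlipDelta m n) ∧
    Tendsto (fun n : ℕ => (n : ℝ) * giniFlipDelta (⌊Real.sqrt (n / 2)⌋₊) n)
      atTop (nhds 4) ∧
    (∀ γ : ℝ, 0 < γ → ∃ n m : ℕ, 1 ≤ m ∧ m ≤ n ∧
      giniFlipDelta m n > 4 / n - γ) := by
  have hlim := tendsto_natCast_mul_giniFlipDelta tendsto_floor_sqrt_half_atTop
    tendsto_floor_sqrt_half_div_self
  refine ⟨fun n m hm hmn => ?_, hlim, fun γ hγ => ?_⟩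
  · rw [gini_gain_sub_flip_eq_giniFlipDelta (by omega) (by omega),
      abs_of_nonneg (giniFlipDelta_nonneg hm hmn)]
  · obtain ⟨n, hclose, hm⟩ := ((hlim.eventually (lt_mem_nhds (by linarith : 4 - γ < 4))).and
      (tendsto_floor_sqrt_half_atTop.eventually_ge_atTop 1)).exists
    have hn : (1 : ℝ) ≤ n := by exact_mod_cast (Nat.one_le_cast.mp hm).trans (floor_sqrt_half_le n)
    refine ⟨n, _, Nat.one_le_cast.mp hm, floor_sqrt_half_le n, ?_⟩
    rw [gt_iff_lt, div_sub' (by positivity), div_lt_iff₀ (by positivity)]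
    nlinarith
end

section
/- (Cross-routing Case B, binary labels.) Let $n_L \ge 2$, $n_R \ge 1$, $n = n_L + n_R$, and let $m \in \{1,\dots,n_L\}$ and $k \in \{0,\dots,n_R\}$ be the class-1 counts in each child. Define $M(m) = \frac{2m - n_L - 1}{n} + \frac{(n_L - m)^2}{n_L(n_L - 1)}$ and $K(k) = \frac{2k - n_R}{n} - \frac{k^2}{n_R(n_R + 1)}$. Then $0 \le M(m) < 1$ and $-1 < K(k) \le 0$, hence $|M(m) + K(k)| < 1$. -/
/-- Cross-routing Case B, binary labels.  With `nL ≥ 2`,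
`nR ≥ 1`, `n = nL + nR`, class-1 counts `m ∈ {1,…,nL}` and `k ∈ {0,…,nR}`,
the quantities
`M(m) = (2m - nL - 1)/n + (nL - m)²/(nL(nL-1))` and
`K(k) = (2k - nR)/n - k²/(nR(nR+1))`
satisfy `0 ≤ M(m) < 1` and `-1 < K(k) ≤ 0`, hence `|M(m) + K(k)| < 1`. -/
theorem caseB_M_K_bounds (nL nR m k : ℕ)
    (hnL : 2 ≤ nL) (hnR : 1 ≤ nR) (hm : 1 ≤ m) (hmle : m ≤ nL) (hk : k ≤ nR) :
    let n : ℝ := (nL : ℝ) + nR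
    let M : ℝ := (2 * (m : ℝ) - nL - 1) / n
      + ((nL : ℝ) - m) ^ 2 / ((nL : ℝ) * ((nL : ℝ) - 1))
    let Kk : ℝ := (2 * (k : ℝ) - nR) / n - (k : ℝ) ^ 2 / ((nR : ℝ) * ((nR : ℝ) + 1))
    (0 ≤ M ∧ M < 1) ∧ (-1 < Kk ∧ Kk ≤ 0) ∧ |M + Kk| < 1 := by
  intro n M Kk
  have hL : (2:ℝ) ≤ nL := by exact_mod_cast hnL
  have hR : (1:ℝ) ≤ nR := by exact_mod_cast hnR
  have h1 : (1:ℝ) ≤ m := by exact_mod_cast hm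
  have h2 : (m:ℝ) ≤ nL := by exact_mod_cast hmle
  have hk0 : (0:ℝ) ≤ k := by positivity
  have hk1 : (k:ℝ) ≤ nR := by exact_mod_cast hk
  have hn : (0:ℝ) < (nL:ℝ) + nR := by linarith
  have hd1 : (0:ℝ) < (nL:ℝ) * ((nL:ℝ) - 1) := by nlinarith
  have hd2 : (0:ℝ) < (nR:ℝ) * ((nR:ℝ) + 1) := by nlinarith
  have hM0 : 0 ≤ M := by
    simp only [M, n]
    rw [div_add_div _ _ hn.ne' hd1.ne']
    apply div_nonneg _ (by positivity)
    nlinarith [sq_nonneg (((nL:ℝ)+1)*((nL:ℝ)-m) - (nL:ℝ)*((nL:ℝ)-1)),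
      mul_nonneg (sq_nonneg ((nL:ℝ)-m)) (by linarith : (0:ℝ) ≤ (nR:ℝ) - 1)]
  have hM1 : M < 1 := by
    simp only [M, n]
    rw [div_add_div _ _ hn.ne' hd1.ne', div_lt_one (by positivity)]
    nlinarith [mul_nonneg (mul_nonneg (by linarith : (0:ℝ) ≤ (nL:ℝ)-1-((nL:ℝ)-m)) (by linarith : (0:ℝ) ≤ (nL:ℝ)-m)) (by linarith : (0:ℝ) ≤ (nL:ℝ)+1),
      mul_nonneg (by linarith : (0:ℝ) ≤ (nR:ℝ)-1) (by nlinarith : (0:ℝ) ≤ (nL:ℝ)*((nL:ℝ)-1) - ((nL:ℝ)-m)^2)]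
  have hK0 : Kk ≤ 0 := by
    simp only [Kk, n]
    rw [sub_nonpos, div_le_div_iff₀ hn hd2]
    nlinarith [sq_nonneg (((nR:ℝ)+2)*(k:ℝ) - (nR:ℝ)*((nR:ℝ)+1)),
      mul_nonneg (sq_nonneg (k:ℝ)) (by linarith : (0:ℝ) ≤ (nL:ℝ) - 2)]
  have hK1 : -1 < Kk := by
    simp only [Kk, n]
    rw [div_sub_div _ _ hn.ne' hd2.ne', lt_div_iff₀ (by positivity)]
    nlinarith [mul_nonneg (mul_nonneg hk0 (by linarith : (0:ℝ) ≤ (nR:ℝ)-k)) hn.le,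
      mul_pos (mul_pos (by linarith : (0:ℝ) < (nR:ℝ)) (by linarith : (0:ℝ) < (nL:ℝ)))
        (by linarith : (0:ℝ) < (nR:ℝ)+1-k),
      mul_nonneg (mul_nonneg hk0 (by linarith : (0:ℝ) ≤ (nR:ℝ))) (by linarith : (0:ℝ) ≤ (nR:ℝ)+2)]
  refine ⟨⟨hM0, hM1⟩, ⟨hK1, hK0⟩, ?_⟩
  rw [abs_lt]
  constructor <;> linarith
end

section
/- (Cross-routing Case B bound.) Under the setup of Case B (a sample of class 1 in the left child is replaced by a sample of class 0 routed to the right child), the change in Gini split gain satisfies $|F(S) - F(S^{(i)})| < 2/n$, strictly tighter than the same-routing bound $4/n$. -/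
lemma gini_up (x y u v : ℝ) (hx : 2 ≤ x) (hy : 1 ≤ y) (hu : 1 ≤ u)
    (hux : u ≤ x) (hv : 0 ≤ v) (hvy : v ≤ y) :
    2*(2*((u+v)/(x+y)) - 1) - 2/(x+y) + 2*(x-u)^2/(x*(x-1)) - 2*v^2/(y*(y+1)) < 2 := by
  have hn0 : (0:ℝ) < x + y := by linarith
  have hx0 : (0:ℝ) < x := by linarith
  have hx1 : (0:ℝ) < x - 1 := by linarith
  have hy0 : (0:ℝ) < y := by linarith
  have hy1 : (0:ℝ) < y + 1 := by linarith
  have e1 : y*(y+1)/(x+y)^2 - (2*v/(x+y) - v^2/(y*(y+1)))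
      = (v*(x+y) - y*(y+1))^2 / ((x+y)^2*(y*(y+1))) := by
    field_simp; ring
  have h1 : 2*v/(x+y) - v^2/(y*(y+1)) ≤ y*(y+1)/(x+y)^2 := by
    have hp : 0 ≤ (v*(x+y) - y*(y+1))^2 / ((x+y)^2*(y*(y+1))) := by positivity
    linarith
  have e2 : (x-u)/x - (x-u)^2/(x*(x-1)) = (x-u)*(u-1)/(x*(x-1)) := by
    field_simp; ring
  have h2 : (x-u)^2/(x*(x-1)) ≤ (x-u)/x := by
    have hp : 0 ≤ (x-u)*(u-1)/(x*(x-1)) :=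
      div_nonneg (mul_nonneg (by linarith) (by linarith)) (by positivity)
    linarith
  have hpoly : 2*u*(x+y)*x + (x-u)*(x+y)^2
      < 2*(x+y)^2*x + (x+y)*x - y*(y+1)*x := by
    rcases le_total (2*x) (x+y) with hc | hc
    · nlinarith [mul_nonneg (by linarith : (0:ℝ) ≤ u - 1) (by linarith : (0:ℝ) ≤ x + y - 2*x),
        mul_pos hy0 hn0, mul_pos hx0 hn0, mul_pos hy0 hx0]
    · nlinarith [mul_nonneg (by linarith : (0:ℝ) ≤ x - u) (by linarith : (0:ℝ) ≤ 2*x - (x+y)),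
        mul_pos hy0 hn0, mul_pos hy0 hy1, mul_pos hy0 hx0]
  have hP : 2*u/(x+y) + (x-u)/x < 2 + 1/(x+y) - y*(y+1)/(x+y)^2 := by
    have eq : (2 + 1/(x+y) - y*(y+1)/(x+y)^2) - (2*u/(x+y) + (x-u)/x)
        = (2*(x+y)^2*x + (x+y)*x - y*(y+1)*x
            - (2*u*(x+y)*x + (x-u)*(x+y)^2)) / ((x+y)^2*x) := by
      field_simp
    have hp : 0 < (2*(x+y)^2*x + (x+y)*x - y*(y+1)*x
        - (2*u*(x+y)*x + (x-u)*(x+y)^2)) / ((x+y)^2*x) :=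
      div_pos (by linarith) (by positivity)
    linarith
  have expand : 2*(2*((u+v)/(x+y)) - 1) - 2/(x+y) + 2*(x-u)^2/(x*(x-1)) - 2*v^2/(y*(y+1))
      = 2*(2*u/(x+y) + (x-u)^2/(x*(x-1))) + 2*(2*v/(x+y) - v^2/(y*(y+1))) - 2 - 2/(x+y) := by
    field_simp; ring
  rw [expand]
  have g1 : 2*(2*v/(x+y) - v^2/(y*(y+1))) ≤ 2*(y*(y+1)/(x+y)^2) := by linarith
  have g2 : 2*((x-u)^2/(x*(x-1))) ≤ 2*((x-u)/x) := by linarith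
  have g3 : 2*(2*u/(x+y)) + 2*((x-u)/x) < 4 + 2*(1/(x+y)) - 2*(y*(y+1)/(x+y)^2) := by linarith
  have g4 : 2/(x+y) = 2*(1/(x+y)) := by ring
  linarith

lemma gini_low (x y u v : ℝ) (hx : 2 ≤ x) (hy : 1 ≤ y) (hu : 1 ≤ u)
    (hux : u ≤ x) (hv : 0 ≤ v) (hvy : v ≤ y) :
    -2 < 2*(2*((u+v)/(x+y)) - 1) - 2/(x+y) + 2*(x-u)^2/(x*(x-1)) - 2*v^2/(y*(y+1)) := by
  have hn0 : (0:ℝ) < x + y := by linarith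
  have hx0 : (0:ℝ) < x := by linarith
  have hx1 : (0:ℝ) < x - 1 := by linarith
  have hy0 : (0:ℝ) < y := by linarith
  have hy1 : (0:ℝ) < y + 1 := by linarith
  have e1 : ((x-u)^2/(x*(x-1)) + 2*u/(x+y)) - (2*x/(x+y) - x*(x-1)/(x+y)^2)
      = ((x-u)*(x+y) - x*(x-1))^2 / ((x+y)^2*(x*(x-1))) := by
    field_simp; ring
  have h1 : 2*x/(x+y) - x*(x-1)/(x+y)^2 ≤ (x-u)^2/(x*(x-1)) + 2*u/(x+y) := by
    have hp : 0 ≤ ((x-u)*(x+y) - x*(x-1))^2 / ((x+y)^2*(x*(x-1))) := by positivity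
    linarith
  have e2 : v/(y+1) - v^2/(y*(y+1)) = v*(y-v)/(y*(y+1)) := by field_simp
  have h2 : v^2/(y*(y+1)) ≤ v/(y+1) := by
    have hp : 0 ≤ v*(y-v)/(y*(y+1)) :=
      div_nonneg (mul_nonneg hv (by linarith)) (by positivity)
    linarith
  have hpoly : (x+y)*(y+1) < 2*x*(x+y)*(y+1) - x*(x-1)*(y+1)
      + 2*v*(x+y)*(y+1) - v*(x+y)^2 := by
    rcases le_total (x+y) (2*(y+1)) with hc | hc
    · nlinarith [mul_nonneg hv (by linarith : (0:ℝ) ≤ 2*(y+1) - (x+y)),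
        mul_pos hy0 hx0, mul_pos hx0 hn0, mul_pos hy0 hn0]
    · nlinarith [mul_nonneg (by linarith : (0:ℝ) ≤ y - v) (by linarith : (0:ℝ) ≤ (x+y) - 2*(y+1)),
        mul_pos hy0 hx0, mul_pos hy0 hy1, mul_pos hx0 hy1, mul_pos hy0 hn0]
  have hP : 1/(x+y) < 2*x/(x+y) - x*(x-1)/(x+y)^2 + 2*v/(x+y) - v/(y+1) := by
    have eq : (2*x/(x+y) - x*(x-1)/(x+y)^2 + 2*v/(x+y) - v/(y+1)) - 1/(x+y)
        = (2*x*(x+y)*(y+1) - x*(x-1)*(y+1) + 2*v*(x+y)*(y+1) - v*(x+y)^2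
            - (x+y)*(y+1)) / ((x+y)^2*(y+1)) := by
      field_simp
    have hp : 0 < (2*x*(x+y)*(y+1) - x*(x-1)*(y+1) + 2*v*(x+y)*(y+1) - v*(x+y)^2
        - (x+y)*(y+1)) / ((x+y)^2*(y+1)) :=
      div_pos (by linarith) (by positivity)
    linarith
  have expand : 2*(2*((u+v)/(x+y)) - 1) - 2/(x+y) + 2*(x-u)^2/(x*(x-1)) - 2*v^2/(y*(y+1))
      = 2*((x-u)^2/(x*(x-1)) + 2*u/(x+y)) + 2*(2*v/(x+y) - v^2/(y*(y+1))) - 2 - 2/(x+y) := by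
    field_simp; ring
  rw [expand]
  have g1 : 2*(2*x/(x+y) - x*(x-1)/(x+y)^2) ≤ 2*((x-u)^2/(x*(x-1)) + 2*u/(x+y)) := by linarith
  have g2 : 2*(v^2/(y*(y+1))) ≤ 2*(v/(y+1)) := by linarith
  have g3 : 2*(1/(x+y)) < 2*(2*x/(x+y)) - 2*(x*(x-1)/(x+y)^2) + 2*(2*v/(x+y)) - 2*(v/(y+1)) := by linarith
  have g4 : 2/(x+y) = 2*(1/(x+y)) := by ring
  linarith


/-- Cross-routing Case B bound.  A class-1 sample in the left
child (size `nL ≥ 2`, `m ≥ 1` class-1 samples) is replaced by a class-0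
sample routed to the right child (size `nR ≥ 1`, `k` class-1 samples).
With `n = nL + nR`, `p = (m+k)/n`, the exact change in Gini split gain
`n·ΔF = 2(2p-1) - 2/n + 2(nL-m)²/(nL(nL-1)) - 2k²/(nR(nR+1))`
satisfies `|ΔF| < 2/n`, strictly tighter than the same-routing bound `4/n`. -/
theorem caseB_gain_bound (nL nR m k : ℕ)
    (hnL : 2 ≤ nL) (hnR : 1 ≤ nR) (hm : 1 ≤ m) (hmle : m ≤ nL) (hk : k ≤ nR)
    (ΔF : ℝ)
    (hΔF : ((nL : ℝ) + nR) * ΔF =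
      2 * (2 * (((m : ℝ) + k) / ((nL : ℝ) + nR)) - 1) - 2 / ((nL : ℝ) + nR)
        + 2 * ((nL : ℝ) - m) ^ 2 / ((nL : ℝ) * ((nL : ℝ) - 1))
        - 2 * (k : ℝ) ^ 2 / ((nR : ℝ) * ((nR : ℝ) + 1))) :
    |ΔF| < 2 / ((nL : ℝ) + nR) ∧
      2 / ((nL : ℝ) + nR) < 4 / ((nL : ℝ) + nR) := by
  have hx : (2:ℝ) ≤ (nL:ℝ) := by exact_mod_cast hnL
  have hy : (1:ℝ) ≤ (nR:ℝ) := by exact_mod_cast hnR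
  have hu : (1:ℝ) ≤ (m:ℝ) := by exact_mod_cast hm
  have hux : (m:ℝ) ≤ (nL:ℝ) := by exact_mod_cast hmle
  have hv : (0:ℝ) ≤ (k:ℝ) := by positivity
  have hvy : (k:ℝ) ≤ (nR:ℝ) := by exact_mod_cast hk
  have hn0 : (0:ℝ) < (nL:ℝ) + nR := by linarith
  have hup := gini_up (nL:ℝ) (nR:ℝ) (m:ℝ) (k:ℝ) hx hy hu hux hv hvy
  have hlo := gini_low (nL:ℝ) (nR:ℝ) (m:ℝ) (k:ℝ) hx hy hu hux hv hvy
  have h1 : ((nL:ℝ) + nR) * ΔF < 2 := by rw [hΔF]; linarith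
  have h2 : -2 < ((nL:ℝ) + nR) * ΔF := by rw [hΔF]; linarith
  constructor
  · rw [abs_lt]
    constructor
    · rw [neg_lt, lt_div_iff₀ hn0]; nlinarith
    · rw [lt_div_iff₀ hn0]; nlinarith
  · rw [div_lt_div_iff₀ hn0 hn0]; nlinarith
end
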